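/- The Hermite function H_ν satisfies the Taylor expansion (addition formula) H_ν(z + ξ) = Σ_{k=0}^∞ (−ν)_k H_{ν−k}(ξ) (−2z)^k / k!, for all complex ν, ξ, z (with absolute convergence). -/
import Mathlib

/-- Pochhammer symbol `(x)_k` (rising factorial). -/
noncomputable def ascp (x : ℂ) (k : ℕ) : ℂ := (ascPochhammer ℂ k).eval x

/-- Kummer confluent hypergeometric function `₁F₁(a; b; x)`. -/
noncomputable def F11 (a b x : ℂ) : ℂ :=
  ∑' k : ℕ, ascp a k / ascp b k * x ^ k / (Nat.factorial k : ℂ)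

/-- Hermite function of complex degree `ν`. -/
noncomputable def HermiteF (ν x : ℂ) : ℂ :=
  (2 : ℂ) ^ ν * (Real.sqrt Real.pi : ℂ) *
    (F11 (-ν / 2) (1 / 2) (x ^ 2) / Complex.Gamma ((1 - ν) / 2)
      - 2 * x * F11 ((1 - ν) / 2) (3 / 2) (x ^ 2) / Complex.Gamma (-ν / 2))

open Nat Finset

lemma ascp_zero (a : ℂ) : ascp a 0 = 1 := by simp [ascp]

lemma ascp_succ (a : ℂ) (k : ℕ) : ascp a (k+1) = ascp a k * (a + k) := by
  simp [ascp, ascPochhammer_succ_eval]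

lemma ascp_succ_left (a : ℂ) (k : ℕ) : ascp a (k+1) = a * ascp (a+1) k := by
  induction k with
  | zero => simp [ascp_succ, ascp_zero]
  | succ k ih =>
      rw [ascp_succ, ih, ascp_succ (a+1) k]
      push_cast
      ring

lemma ascp_norm_le (a : ℂ) (k : ℕ) : ‖ascp a k‖ ≤ (‖a‖+1)^k * k ! := by
  induction k with
  | zero => simp [ascp_zero]
  | succ k ih =>
      rw [ascp_succ, norm_mul]
      have h1 : ‖a + (k:ℂ)‖ ≤ ‖a‖ + k := by
        calc ‖a + (k:ℂ)‖ ≤ ‖a‖ + ‖(k:ℂ)‖ := norm_add_le _ _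
        _ = ‖a‖ + k := by rw [Complex.norm_natCast]
      calc ‖ascp a k‖ * ‖a + (k:ℂ)‖ ≤ ((‖a‖+1)^k * k !) * (‖a‖ + k) := by
            apply mul_le_mul ih h1 (norm_nonneg _) (by positivity)
        _ ≤ (‖a‖+1)^(k+1) * (k+1)! := by
            rw [pow_succ, Nat.factorial_succ]
            push_cast
            have hx : (‖a‖ + (k:ℝ)) ≤ (‖a‖+1)*((k:ℝ)+1) := by
              nlinarith [norm_nonneg a, Nat.cast_nonneg (α := ℝ) k]
            calc (‖a‖+1)^k * (k ! : ℝ) * (‖a‖ + (k:ℝ))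
                ≤ (‖a‖+1)^k * (k ! : ℝ) * ((‖a‖+1)*((k:ℝ)+1)) := by
                  apply mul_le_mul_of_nonneg_left hx (by positivity)
              _ = (‖a‖+1)^k*(‖a‖+1) * (((k:ℝ)+1)*(k ! : ℝ)) := by ring

lemma ascp_lower (b : ℝ) (hb : 1/2 ≤ b) (k : ℕ) : (k ! : ℝ)/2^k ≤ ‖ascp (b:ℂ) k‖ := by
  induction k with
  | zero => norm_num [ascp_zero]
  | succ k ih =>
      rw [ascp_succ, norm_mul]
      have h1 : ‖(b:ℂ) + (k:ℂ)‖ = b + k := by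
        rw [show (b:ℂ) + (k:ℂ) = ((b + k : ℝ):ℂ) by push_cast; ring, Complex.norm_real]
        exact Real.norm_of_nonneg (by positivity)
      rw [h1]
      have h2 : ((k+1)! : ℝ)/2^(k+1) = ((k ! : ℝ)/2^k) * ((k+1)/2) := by
        rw [Nat.factorial_succ]; push_cast; ring
      rw [h2]
      apply mul_le_mul ih (by linarith) (by positivity) (norm_nonneg _)

lemma hb_half (k : ℕ) : (k ! : ℝ)/2^k ≤ ‖ascp (1/2 : ℂ) k‖ := by
  have := ascp_lower (1/2) le_rfl k
  simpa using this

lemma hb_3half (k : ℕ) : (k ! : ℝ)/2^k ≤ ‖ascp (3/2 : ℂ) k‖ := by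
  have := ascp_lower (3/2) (by norm_num) k
  simpa using this

lemma ascp_half_ne (k : ℕ) : ascp (1/2 : ℂ) k ≠ 0 := by
  intro h
  have h1 := hb_half k
  rw [h, norm_zero] at h1
  have : (0:ℝ) < (k ! : ℝ)/2^k := by positivity
  linarith

lemma ascp_3half_ne (k : ℕ) : ascp (3/2 : ℂ) k ≠ 0 := by
  intro h
  have h1 := hb_3half k
  rw [h, norm_zero] at h1
  have : (0:ℝ) < (k ! : ℝ)/2^k := by positivity
  linarith

-- coefficients
noncomputable def Kc (ν : ℂ) : ℂ := (2:ℂ)^ν * (Real.sqrt Real.pi : ℂ)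

noncomputable def ce (ν : ℂ) (k : ℕ) : ℂ :=
  Kc ν / Complex.Gamma ((1 - ν)/2) * (ascp (-ν/2) k / ascp (1/2 : ℂ) k / (k ! : ℂ))

noncomputable def co (ν : ℂ) (k : ℕ) : ℂ :=
  -2 * Kc ν / Complex.Gamma (-ν/2) * (ascp ((1-ν)/2) k / ascp (3/2 : ℂ) k / (k ! : ℂ))

noncomputable def c (ν : ℂ) (n : ℕ) : ℂ :=
  if n % 2 = 0 then ce ν (n/2) else co ν (n/2)

lemma c_even (ν : ℂ) (k : ℕ) : c ν (2*k) = ce ν k := by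
  simp only [c]
  rw [if_pos (by omega)]
  congr 1
  omega

lemma c_odd (ν : ℂ) (k : ℕ) : c ν (2*k+1) = co ν k := by
  simp only [c]
  rw [if_neg (by omega)]
  congr 1
  omega

lemma summable_F11_norm (a b : ℂ) (hb : ∀ k : ℕ, (k ! : ℝ)/2^k ≤ ‖ascp b k‖) (y : ℂ) :
    Summable (fun k : ℕ => ‖ascp a k / ascp b k * y^k / (k ! : ℂ)‖) := by
  apply Summable.of_nonneg_of_le (fun k => norm_nonneg _) (fun k => ?_)
    (Real.summable_pow_div_factorial (2*(‖a‖+1)*‖y‖))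
  have h2 : (0:ℝ) < (k ! : ℝ)/2^k := by positivity
  have hbk := hb k
  have hfk : (0:ℝ) < (k ! : ℝ) := by exact_mod_cast Nat.factorial_pos k
  calc ‖ascp a k / ascp b k * y^k / (k ! : ℂ)‖
      = ‖ascp a k‖/‖ascp b k‖*‖y‖^k/(k ! : ℝ) := by
        simp [norm_div, norm_mul, norm_pow, Complex.norm_natCast]
    _ ≤ ((‖a‖+1)^k * (k ! : ℝ))/((k ! : ℝ)/2^k)*‖y‖^k/(k ! : ℝ) := by
        gcongr
        exact ascp_norm_le a k
    _ = (2*(‖a‖+1)*‖y‖)^k / (k ! : ℝ) := by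
        rw [mul_pow, mul_pow]
        field_simp

lemma hasSum_F11 (a b : ℂ) (hb : ∀ k : ℕ, (k ! : ℝ)/2^k ≤ ‖ascp b k‖) (y : ℂ) :
    HasSum (fun k : ℕ => ascp a k / ascp b k * y^k / (k ! : ℂ)) (F11 a b y) :=
  ((summable_F11_norm a b hb y).of_norm).hasSum

lemma hasSum_c (ν x : ℂ) : HasSum (fun n : ℕ => c ν n * x ^ n) (HermiteF ν x) := by
  have he : HasSum (fun k : ℕ => c ν (2*k) * x^(2*k))
      (Kc ν / Complex.Gamma ((1-ν)/2) * F11 (-ν/2) (1/2) (x^2)) := by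
    have h := (hasSum_F11 (-ν/2) (1/2) hb_half (x^2)).mul_left
      (Kc ν / Complex.Gamma ((1-ν)/2))
    have hfun : (fun k : ℕ => Kc ν / Complex.Gamma ((1-ν)/2) *
        (ascp (-ν/2) k / ascp (1/2 : ℂ) k * (x^2)^k / (k ! : ℂ))) =
        fun k : ℕ => c ν (2*k) * x^(2*k) := by
      funext k
      rw [c_even, ce, pow_mul]
      ring
    rwa [hfun] at h
  have ho : HasSum (fun k : ℕ => c ν (2*k+1) * x^(2*k+1))
      (-2 * Kc ν / Complex.Gamma (-ν/2) * x * F11 ((1-ν)/2) (3/2) (x^2)) := by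
    have h := (hasSum_F11 ((1-ν)/2) (3/2) hb_3half (x^2)).mul_left
      (-2 * Kc ν / Complex.Gamma (-ν/2) * x)
    have hfun : (fun k : ℕ => -2 * Kc ν / Complex.Gamma (-ν/2) * x *
        (ascp ((1-ν)/2) k / ascp (3/2 : ℂ) k * (x^2)^k / (k ! : ℂ))) =
        fun k : ℕ => c ν (2*k+1) * x^(2*k+1) := by
      funext k
      rw [c_odd, co, pow_succ x (2*k), pow_mul x 2 k]
      ring
    rwa [hfun] at h
  have h := HasSum.even_add_odd (f := fun n : ℕ => c ν n * x^n) he ho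
  have hv : Kc ν / Complex.Gamma ((1-ν)/2) * F11 (-ν/2) (1/2) (x^2) +
      -2 * Kc ν / Complex.Gamma (-ν/2) * x * F11 ((1-ν)/2) (3/2) (x^2) = HermiteF ν x := by
    rw [HermiteF, Kc]
    ring
  rwa [hv] at h

lemma summable_c_norm (ν x : ℂ) : Summable (fun n : ℕ => ‖c ν n * x ^ n‖) := by
  have he : Summable (fun k : ℕ => ‖c ν (2*k) * x^(2*k)‖) := by
    have h := (summable_F11_norm (-ν/2) (1/2) hb_half (x^2)).mul_left
      ‖Kc ν / Complex.Gamma ((1-ν)/2)‖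
    apply h.congr
    intro k
    rw [← norm_mul]
    congr 1
    rw [c_even, ce, pow_mul]
    ring
  have ho : Summable (fun k : ℕ => ‖c ν (2*k+1) * x^(2*k+1)‖) := by
    have h := (summable_F11_norm ((1-ν)/2) (3/2) hb_3half (x^2)).mul_left
      ‖-2 * Kc ν / Complex.Gamma (-ν/2) * x‖
    apply h.congr
    intro k
    rw [← norm_mul]
    congr 1
    rw [c_odd, co, pow_succ x (2*k), pow_mul x 2 k]
    ring
  exact (HasSum.even_add_odd (f := fun n : ℕ => ‖c ν n * x^n‖) he.hasSum ho.hasSum).summable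

lemma summable_c_real (ν : ℂ) (r : ℝ) (hr : 0 ≤ r) :
    Summable (fun n : ℕ => ‖c ν n‖ * r^n) := by
  apply (summable_c_norm ν (r:ℂ)).congr
  intro n
  rw [norm_mul, norm_pow, Complex.norm_real, Real.norm_of_nonneg hr]

lemma gam (ν : ℂ) : ν * (Complex.Gamma (1 - ν/2))⁻¹ = -2 * (Complex.Gamma (-ν/2))⁻¹ := by
  rcases eq_or_ne ν 0 with rfl | hν
  · simp [Complex.Gamma_zero]
  · have hν2 : -ν/2 ≠ 0 := by
      simpa using div_ne_zero (neg_ne_zero.2 hν) (two_ne_zero (α := ℂ))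
    have h := Complex.Gamma_add_one (-ν/2) hν2
    have e : (1 : ℂ) - ν/2 = -ν/2 + 1 := by ring
    rw [e, h]
    rcases eq_or_ne (Complex.Gamma (-ν/2)) 0 with h0 | h0
    · simp [h0]
    · field_simp

lemma Kc_sub_one (ν : ℂ) : Kc (ν - 1) = Kc ν / 2 := by
  rw [Kc, Kc, Complex.cpow_sub _ _ (two_ne_zero (α := ℂ)), Complex.cpow_one]
  ring

lemma P32 (k : ℕ) : ascp (3/2 : ℂ) k = (2*k+1) * ascp (1/2 : ℂ) k := by
  induction k with
  | zero => simp [ascp_zero]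
  | succ k ih =>
      rw [ascp_succ, ih, ascp_succ]
      push_cast
      ring

lemma key1 (ν : ℂ) (m : ℕ) : ((m:ℂ)+1) * c ν (m+1) = 2 * ν * c (ν-1) m := by
  rcases Nat.even_or_odd m with ⟨k, hk⟩ | ⟨k, hk⟩
  · subst hk
    rw [show k + k = 2*k from by ring, c_odd, c_even, co, ce]
    have e1 : -(ν-1)/2 = (1-ν)/2 := by ring
    have e2 : (1-(ν-1))/2 = 1 - ν/2 := by ring
    rw [e1, e2, P32, Kc_sub_one, div_mul_eq_div_div]
    have h2k : (2*(k:ℂ)+1) ≠ 0 := by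
      have : (0:ℝ) < 2*(k:ℝ)+1 := by positivity
      intro h
      have := congrArg Complex.re h
      push_cast at this
      simp at this
      linarith
    have hg := gam ν
    have hc : (2*(k:ℂ)+1) * (2*(k:ℂ)+1)⁻¹ = 1 := mul_inv_cancel₀ h2k
    push_cast
    linear_combination (-(Kc ν * ascp ((1-ν)/2) k * (ascp (1/2:ℂ) k)⁻¹ * ((k ! : ℂ))⁻¹)) * hg
      + (-2*Kc ν * ascp ((1-ν)/2) k * (ascp (1/2:ℂ) k)⁻¹ * ((k ! : ℂ))⁻¹ *
        (Complex.Gamma (-ν/2))⁻¹) * hc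
  · subst hk
    rw [show 2*k+1+1 = 2*(k+1) from by ring, c_even, c_odd, ce, co]
    have e1 : -(ν-1)/2 = (1-ν)/2 := by ring
    have e2 : (1-(ν-1))/2 = 1 - ν/2 := by ring
    rw [e1, e2, Kc_sub_one]
    rw [ascp_succ_left (-ν/2) k, ascp_succ_left (1/2 : ℂ) k]
    have e3 : -ν/2 + 1 = 1 - ν/2 := by ring
    have e4 : (1/2 : ℂ) + 1 = 3/2 := by norm_num
    have hfact : (((k+1)! : ℕ) : ℂ) = ((k:ℂ)+1) * ((k ! : ℕ) : ℂ) := by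
      push_cast [Nat.factorial_succ]
      ring
    rw [e3, e4, hfact, div_mul_eq_div_div, div_mul_eq_div_div]
    have h3 := ascp_3half_ne k
    have hf : ((k ! : ℕ) : ℂ) ≠ 0 := Nat.cast_ne_zero.2 (Nat.factorial_ne_zero k)
    have hk1 : ((k:ℂ)+1) ≠ 0 := by
      intro h
      have := congrArg Complex.re h
      push_cast at this
      simp at this
      linarith [Nat.cast_nonneg (α := ℝ) k]
    have hc : ((k:ℂ)+1) * ((k:ℂ)+1)⁻¹ = 1 := mul_inv_cancel₀ hk1
    push_cast
    linear_combination (-2*ν*Kc ν*(Complex.Gamma ((1-ν)/2))⁻¹*ascp (1 - ν/2) k*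
      (ascp (3/2:ℂ) k)⁻¹*((k ! : ℂ))⁻¹) * hc

lemma keyj (ν : ℂ) (j m : ℕ) :
    (((j+m).choose j : ℕ) : ℂ) * ((j ! : ℕ) : ℂ) * c ν (j+m) =
      ascp (-ν) j * (-2)^j * c (ν - j) m := by
  induction j generalizing m with
  | zero => simp [ascp_zero]
  | succ j ih =>
      have hIH := ih (m+1)
      have hk1 := key1 (ν - j) m
      have hch : ((j+1+m).choose (j+1)) * (j+1) = ((j+1+m).choose j) * (m+1) := by
        have h := Nat.choose_succ_right_eq (j+1+m) j
        have : j+1+m-j = m+1 := by omega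
        rw [this] at h
        omega
      have h1 : (((j+1+m).choose (j+1) : ℕ) : ℂ) * ((j:ℂ)+1)
          = (((j+1+m).choose j : ℕ) : ℂ) * ((m:ℂ)+1) := by exact_mod_cast hch
      have hm1 : ((m:ℂ)+1) ≠ 0 := Nat.cast_add_one_ne_zero m
      have hje : j + (m+1) = j+1+m := by omega
      rw [hje] at hIH
      have hfact : (((j+1)! : ℕ) : ℂ) = ((j:ℂ)+1) * ((j ! : ℕ) : ℂ) := by
        push_cast [Nat.factorial_succ]
        ring
      have hnu : ν - ((j:ℕ)+1 : ℂ) = ν - (j:ℂ) - 1 := by ring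
      rw [hfact, ascp_succ, show ((j+1:ℕ):ℂ) = (j:ℂ)+1 from by push_cast; rfl]
      rw [hnu]
      linear_combination ((j ! : ℕ) : ℂ) * c ν (j+1+m) * h1 + ((m:ℂ)+1) * hIH
        + (ascp (-ν) j * (-2)^j) * hk1

/-- addition (Taylor) formula for the Hermite function,
`H_ν(z+ξ) = Σ_k (−ν)_k H_{ν−k}(ξ) (−2z)^k / k!`, with absolute convergence. -/
theorem hermite_addition_formula (ν ξ z : ℂ) :
    HasSum (fun k : ℕ => ascp (-ν) k * HermiteF (ν - k) ξ * (-2 * z) ^ k / (Nat.factorial k : ℂ))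
      (HermiteF ν (z + ξ))
    ∧ Summable (fun k : ℕ =>
        ‖ascp (-ν) k * HermiteF (ν - k) ξ * (-2 * z) ^ k / (Nat.factorial k : ℂ)‖) := by
  set g : ℕ × ℕ → ℂ :=
    fun p => c ν (p.1+p.2) * (((p.1+p.2).choose p.1 : ℕ) : ℂ) * z^p.1 * ξ^p.2 with hgdef
  -- norm summability over the grid
  have hdiag : ∀ n : ℕ, ∑ p ∈ antidiagonal n, ‖g p‖ = ‖c ν n‖ * (‖z‖ + ‖ξ‖)^n := by
    intro n
    rw [Finset.Nat.sum_antidiagonal_eq_sum_range_succ_mk]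
    rw [add_pow, Finset.mul_sum]
    apply Finset.sum_congr rfl
    intro i hi
    have hin : i ≤ n := by
      simp only [Finset.mem_range] at hi
      omega
    have h1 : i + (n - i) = n := by omega
    simp only [hgdef, h1]
    rw [norm_mul, norm_mul, norm_mul, norm_pow, norm_pow, Complex.norm_natCast]
    ring
  have hnorm : Summable (fun p : ℕ × ℕ => ‖g p‖) := by
    rw [← Finset.HasAntidiagonal.sigmaAntidiagonalEquivProd.summable_iff]
    refine (summable_sigma_of_nonneg (fun _ => norm_nonneg _)).2 ⟨?_, ?_⟩
    · intro n
      exact (hasSum_fintype _).summable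
    · refine Summable.congr (summable_c_real ν (‖z‖ + ‖ξ‖) (by positivity)) fun n => ?_
      rw [tsum_fintype]
      have : ∑ p : (antidiagonal n : Finset (ℕ × ℕ)), ‖g p.val‖ = ∑ p ∈ antidiagonal n, ‖g p‖ :=
        Finset.sum_coe_sort (antidiagonal n) (fun p => ‖g p‖)
      exact (this.trans (hdiag n)).symm
  have hsg : Summable g := hnorm.of_norm
  have hS := hsg.hasSum
  set S := ∑' p, g p with hSdef
  -- diagonal grouping: S = HermiteF ν (z+ξ)
  have hdiag2 : HasSum (fun n : ℕ => c ν n * (z+ξ)^n) S := by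
    have h := (Finset.HasAntidiagonal.sigmaAntidiagonalEquivProd.hasSum_iff (f := g) (a := S)).2 hS
    apply h.sigma
    intro n
    have h2 : ∑ p : (antidiagonal n : Finset (ℕ × ℕ)), g p.val = c ν n * (z+ξ)^n := by
      rw [Finset.sum_coe_sort (antidiagonal n) (fun p => g p)]
      rw [Finset.Nat.sum_antidiagonal_eq_sum_range_succ_mk]
      rw [add_pow, Finset.mul_sum]
      apply Finset.sum_congr rfl
      intro i hi
      have hin : i ≤ n := by
        simp only [Finset.mem_range] at hi
        omega
      have h1 : i + (n - i) = n := by omega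
      simp only [hgdef, h1]
      ring
    have h3 := hasSum_fintype (fun p : (antidiagonal n : Finset (ℕ × ℕ)) => g p.val)
    rw [h2] at h3
    exact h3
  have hSval : S = HermiteF ν (z + ξ) := hdiag2.unique (hasSum_c ν (z+ξ))
  -- row grouping
  have hrow : ∀ j : ℕ, HasSum (fun m : ℕ => g (j, m))
      (ascp (-ν) j * HermiteF (ν - j) ξ * (-2 * z) ^ j / ((j ! : ℕ) : ℂ)) := by
    intro j
    have hj : ((j ! : ℕ) : ℂ) ≠ 0 := Nat.cast_ne_zero.2 (Nat.factorial_ne_zero j)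
    have h0 := (hasSum_c (ν - j) ξ).mul_left (ascp (-ν) j * (-2)^j / ((j ! : ℕ) : ℂ) * z^j)
    have hfun : (fun m : ℕ => ascp (-ν) j * (-2)^j / ((j ! : ℕ) : ℂ) * z^j * (c (ν - j) m * ξ^m))
        = fun m : ℕ => g (j, m) := by
      funext m
      simp only [hgdef]
      have hkey : c ν (j+m) * (((j+m).choose j : ℕ) : ℂ)
          = ascp (-ν) j * (-2)^j * c (ν - j) m / ((j ! : ℕ) : ℂ) := by
        rw [eq_div_iff hj]
        linear_combination keyj ν j m
      rw [show c ν (j+m) * (((j+m).choose j : ℕ) : ℂ) * z^j * ξ^m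
          = (c ν (j+m) * (((j+m).choose j : ℕ) : ℂ)) * z^j * ξ^m from by ring, hkey]
      ring
    rw [hfun] at h0
    have hval : ascp (-ν) j * (-2)^j / ((j ! : ℕ) : ℂ) * z^j * HermiteF (ν - j) ξ
        = ascp (-ν) j * HermiteF (ν - j) ξ * (-2 * z) ^ j / ((j ! : ℕ) : ℂ) := by
      rw [mul_pow]
      ring
    rw [hval] at h0
    exact h0
  have hmain : HasSum (fun k : ℕ =>
      ascp (-ν) k * HermiteF (ν - k) ξ * (-2 * z) ^ k / ((k ! : ℕ) : ℂ)) S :=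
    hS.prod_fiberwise hrow
  rw [hSval] at hmain
  refine ⟨hmain, ?_⟩
  -- absolute convergence
  have hrows := ((summable_prod_of_nonneg (f := fun p : ℕ × ℕ => ‖g p‖)
    (fun p => norm_nonneg _)).1 hnorm)
  apply Summable.of_nonneg_of_le (fun k => norm_nonneg _) (fun j => ?_) hrows.2
  rw [← (hrow j).tsum_eq]
  exact norm_tsum_le_tsum_norm (hrows.1 j)
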